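/- arXiv:2407.05011 — 6 statements merged into one kernel-verified Lean document; each statement's English description precedes it below -/
import Mathlib

section
/- Let C = [I,S] with I < S, let H be a real random variable whose CDF Φ satisfies ψ(x) ≤ Φ(x) ≤ φ(x) for all x ∈ [I,S], where φ, ψ : [I,S] → (0,1) are C¹ functions. Let X = Π_C(H), let X_1,…,X_N be i.i.d. copies of X, and set Î_N = min{X_1,…,X_N}, Ŝ_N = max{X_1,…,X_N}. Then N·max{S − Ŝ_N, Î_N − I} converges in probability to 0 as N → ∞. -/
/-!
`X = Π_C(H)` has atoms at both ends of `C`: `P(X = S) ≥ 1 - Φ(S) > 0` and `P(X = I) = Φ(I) > 0`.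
Unless all `N` samples miss the atom at `S` or all miss the atom at `I`, which happens with
probability at most `P(X < S)^N + P(X > I)^N → 0`, the sample extremes are exactly `S` and `I`,
and then `N·max{S − Ŝ_N, Î_N − I} = 0`.
-/

open MeasureTheory ProbabilityTheory Filter Set

section Extremes

variable {ι Ω : Type*}

theorem setOf_pos_max_sub_sup'_inf'_sub_subset (X : ι → Ω → ℝ) {t : Finset ι}
    (ht : t.Nonempty) (I S : ℝ) :
    {ω | 0 < max (S - t.sup' ht (X · ω)) (t.inf' ht (X · ω) - I)} ⊆
      (⋂ k ∈ t, X k ⁻¹' Iio S) ∪ ⋂ k ∈ t, X k ⁻¹' Ioi I := by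
  intro ω hω
  simp only [mem_ofPred_eq, lt_max_iff, sub_pos, Finset.sup'_lt_iff, Finset.lt_inf'_iff] at hω
  simpa only [mem_union, mem_iInter₂, mem_preimage, mem_Iio, mem_Ioi] using hω

variable [MeasurableSpace Ω] {P : Measure Ω}

theorem ProbabilityTheory.iIndepFun.measure_biInter_preimage_eq_pow {β : Type*}
    [MeasurableSpace β] {X : ι → Ω → β} {Y : Ω → β} (hindep : iIndepFun X P)
    (hident : ∀ k, IdentDistrib (X k) Y P P) {s : Set β} (hs : MeasurableSet s)
    (t : Finset ι) : P (⋂ k ∈ t, X k ⁻¹' s) = P (Y ⁻¹' s) ^ t.card := by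
  rw [hindep.measure_inter_preimage_eq_mul t (sets := fun _ => s) fun _ _ => hs,
    Finset.prod_congr rfl fun k _ => (hident k).measure_mem_eq hs, Finset.prod_const]

theorem measure_pos_max_sub_sup'_inf'_sub_le {X : ι → Ω → ℝ} {Y : Ω → ℝ}
    (hindep : iIndepFun X P) (hident : ∀ k, IdentDistrib (X k) Y P P) {t : Finset ι}
    (ht : t.Nonempty) (I S : ℝ) :
    P {ω | 0 < max (S - t.sup' ht (X · ω)) (t.inf' ht (X · ω) - I)} ≤
      P (Y ⁻¹' Iio S) ^ t.card + P (Y ⁻¹' Ioi I) ^ t.card := by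
  calc _ ≤ P ((⋂ k ∈ t, X k ⁻¹' Iio S) ∪ ⋂ k ∈ t, X k ⁻¹' Ioi I) :=
        measure_mono (setOf_pos_max_sub_sup'_inf'_sub_subset X ht I S)
    _ ≤ _ := (measure_union_le _ _).trans_eq <| by
        rw [hindep.measure_biInter_preimage_eq_pow hident measurableSet_Iio,
          hindep.measure_biInter_preimage_eq_pow hident measurableSet_Ioi]

theorem tendsto_measure_pos_max_sub_sup'_inf'_sub {X : ℕ → Ω → ℝ} {Y : Ω → ℝ}
    (hindep : iIndepFun X P) (hident : ∀ k, IdentDistrib (X k) Y P P) {I S : ℝ}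
    (hS : P (Y ⁻¹' Iio S) < 1) (hI : P (Y ⁻¹' Ioi I) < 1) :
    Tendsto (fun N : ℕ => P {ω | 0 < max
        (S - (Finset.range (N + 1)).sup' Finset.nonempty_range_add_one (X · ω))
        ((Finset.range (N + 1)).inf' Finset.nonempty_range_add_one (X · ω) - I)})
      atTop (nhds 0) := by
  have hpow : Tendsto (fun N : ℕ => P (Y ⁻¹' Iio S) ^ (N + 1) + P (Y ⁻¹' Ioi I) ^ (N + 1))
      atTop (nhds 0) := by
    simpa only [add_zero, Function.comp_def] using
      ((ENNReal.tendsto_pow_atTop_nhds_zero_of_lt_one hS).add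
        (ENNReal.tendsto_pow_atTop_nhds_zero_of_lt_one hI)).comp (tendsto_add_atTop_nat 1)
  refine tendsto_of_tendsto_of_tendsto_of_le_of_le tendsto_const_nhds hpow (fun _ => zero_le)
    fun N => ?_
  simpa using measure_pos_max_sub_sup'_inf'_sub_le hindep hident Finset.nonempty_range_add_one I S

end Extremes

theorem stmt4_general {Ω : Type*} [MeasurableSpace Ω] (P : Measure Ω) [IsProbabilityMeasure P]
    (I S : ℝ) (hIS : I < S) (H : Ω → ℝ) (hHm : Measurable H)
    (Φ φ ψ : ℝ → ℝ) (hΦ : ∀ x, Φ x = (P {ω | H ω ≤ x}).toReal)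
    (hφmem : ∀ x ∈ Set.Icc I S, φ x ∈ Set.Ioo (0:ℝ) 1)
    (hψmem : ∀ x ∈ Set.Icc I S, ψ x ∈ Set.Ioo (0:ℝ) 1)
    (hsandwich : ∀ x ∈ Set.Icc I S, ψ x ≤ Φ x ∧ Φ x ≤ φ x)
    (X : ℕ → Ω → ℝ)
    (hindep : iIndepFun X P)
    (hident : ∀ k, IdentDistrib (X k) (fun ω => min (max (H ω) I) S) P P) :
    ∀ ε > (0:ℝ),
      Tendsto
        (fun N : ℕ =>
          P {ω | ε < ((N:ℝ) + 1) * max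
            (S - (Finset.range (N + 1)).sup' Finset.nonempty_range_add_one (fun k => X k ω))
            ((Finset.range (N + 1)).inf' Finset.nonempty_range_add_one (fun k => X k ω) - I)})
        atTop (nhds 0) := by
  intro ε hε
  have hΦS : Φ S < 1 := (hsandwich S ⟨hIS.le, le_rfl⟩).2.trans_lt (hφmem S ⟨hIS.le, le_rfl⟩).2
  have hΦI : 0 < Φ I := (hψmem I ⟨le_rfl, hIS.le⟩).1.trans_le (hsandwich I ⟨le_rfl, hIS.le⟩).1
  have hS : P {ω | H ω < S} < 1 := by
    refine (measure_mono (t := {ω | H ω ≤ S}) fun ω (hω : H ω < S) => hω.le).trans_lt <|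
      prob_le_one.lt_of_ne fun h => ?_
    simp [hΦ, h] at hΦS
  have hI : P {ω | I < H ω} < 1 := by
    have h0 : 0 < P {ω | H ω ≤ I} := (ENNReal.toReal_pos_iff.mp (hΦ I ▸ hΦI)).1
    have hcompl : {ω | I < H ω} = {ω | H ω ≤ I}ᶜ := by ext; simp
    rw [hcompl, prob_compl_eq_one_sub (measurableSet_le hHm measurable_const)]
    exact ENNReal.sub_lt_self ENNReal.one_ne_top one_ne_zero h0.ne'
  refine tendsto_of_tendsto_of_tendsto_of_le_of_le tendsto_const_nhds
    (tendsto_measure_pos_max_sub_sup'_inf'_sub hindep hident (I := I) (S := S)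
      ((measure_mono fun ω hω => ?_).trans_lt hS) ((measure_mono fun ω hω => ?_).trans_lt hI))
    (fun _ => zero_le) fun N => measure_mono fun ω hω => ?_
  · exact (by simpa using hω : H ω < S ∧ I < S).1
  · exact (by simpa using hω : I < H ω ∧ I < S).1
  · exact pos_of_mul_pos_right (hε.trans hω) (by positivity)

/-- Let `C = [I,S]` with `I < S`, `H` a real random variable whose CDF `Φ` satisfies
`ψ ≤ Φ ≤ φ` on `[I,S]` with `φ, ψ : [I,S] → (0,1)` of class `C¹`. With `X = Π_C(H)`,
`X_1, X_2, …` i.i.d. copies of `X`, `Î_N = min{X_1,…,X_N}` and `Ŝ_N = max{X_1,…,X_N}`,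
`N·max{S − Ŝ_N, Î_N − I}` converges in probability to `0`. -/
theorem stmt4 {Ω : Type*} [MeasurableSpace Ω] (P : Measure Ω) [IsProbabilityMeasure P]
    (I S : ℝ) (hIS : I < S) (H : Ω → ℝ) (hHm : Measurable H)
    (Φ φ ψ : ℝ → ℝ) (hΦ : ∀ x, Φ x = (P {ω | H ω ≤ x}).toReal)
    (hφC1 : ContDiffOn ℝ 1 φ (Set.Icc I S)) (hψC1 : ContDiffOn ℝ 1 ψ (Set.Icc I S))
    (hφmem : ∀ x ∈ Set.Icc I S, φ x ∈ Set.Ioo (0:ℝ) 1)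
    (hψmem : ∀ x ∈ Set.Icc I S, ψ x ∈ Set.Ioo (0:ℝ) 1)
    (hsandwich : ∀ x ∈ Set.Icc I S, ψ x ≤ Φ x ∧ Φ x ≤ φ x)
    (X : ℕ → Ω → ℝ) (hXm : ∀ k, Measurable (X k))
    (hindep : iIndepFun X P)
    (hident : ∀ k, IdentDistrib (X k) (fun ω => min (max (H ω) I) S) P P) :
    ∀ ε > (0:ℝ),
      Tendsto
        (fun N : ℕ =>
          P {ω | ε < ((N:ℝ) + 1) * max
            (S - (Finset.range (N + 1)).sup' Finset.nonempty_range_add_one (fun k => X k ω))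
            ((Finset.range (N + 1)).inf' Finset.nonempty_range_add_one (fun k => X k ω) - I)})
        atTop (nhds 0) :=
  stmt4_general P I S hIS H hHm Φ φ ψ hΦ hφmem hψmem hsandwich X hindep hident
end

section
/- Let C be a convex body of ℝ^m (a compact convex set with nonempty interior), H an ℝ^m-valued random variable, X = Π_C(H) the orthogonal projection of H onto C, and X_1,…,X_N i.i.d. copies of X. Let Ĥ_N = conv{X_1,…,X_N} be their convex hull. Assume that for every x ∈ int(C) and every ε > 0, P(H ∈ B̄(x,ε) ∩ int(C)) > 0. Then for every x ∈ int(C), the distance d(x, Ĥ_N) converges in probability to 0 as N → ∞. -/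
open MeasureTheory ProbabilityTheory Filter Metric ENNReal

/-! If the law of `H` charges every neighbourhood of `x` inside `int C`, then so does the law of
`X₀ = Π_C(H)`, since the projection fixes `C`. Hence each sample lands in `B̄(x, ε)` with a fixed
probability `q > 0`, and by independence the probability that none of `X_0, …, X_N` does is
`(1 - q)^(N+1) → 0`. A sample in `B̄(x, ε)` lies in the hull, so it forces `d(x, Ĉ_N) ≤ ε`. -/

namespace ProbabilityTheory

variable {Ω β : Type*} [MeasurableSpace Ω] [MeasurableSpace β] {P : Measure Ω}
  {X : ℕ → Ω → β} {Y : Ω → β} {s : Set β}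

theorem iIndepFun.measure_iInter_preimage_eq_pow (hindep : iIndepFun X P)
    (hident : ∀ k, IdentDistrib (X k) Y P P) (hs : MeasurableSet s) (n : ℕ) :
    P (⋂ k ∈ Finset.range n, X k ⁻¹' s) = P (Y ⁻¹' s) ^ n := by
  rw [hindep.measure_inter_preimage_eq_mul _ fun _ _ => hs,
    Finset.prod_congr rfl fun k _ => (hident k).measure_mem_eq hs, Finset.prod_const,
    Finset.card_range]

theorem iIndepFun.tendsto_measure_iInter_preimage_compl [IsProbabilityMeasure P]
    (hindep : iIndepFun X P) (hident : ∀ k, IdentDistrib (X k) Y P P) (hs : MeasurableSet s)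
    (hpos : 0 < P (Y ⁻¹' s)) :
    Tendsto (fun n => P (⋂ k ∈ Finset.range n, X k ⁻¹' sᶜ)) atTop (nhds 0) := by
  have hY : NullMeasurableSet (Y ⁻¹' s) P := (hident 0).aemeasurable_snd.nullMeasurableSet_preimage hs
  have hlt : P (Y ⁻¹' sᶜ) < 1 := by
    rw [Set.preimage_compl, prob_compl_eq_one_sub₀ hY]
    exact ENNReal.sub_lt_self one_ne_top one_ne_zero hpos.ne'
  simpa only [hindep.measure_iInter_preimage_eq_pow hident hs.compl] using
    ENNReal.tendsto_pow_atTop_nhds_zero_of_lt_one hlt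

end ProbabilityTheory

theorem eq_of_mem_of_forall_dist_le {α : Type*} [MetricSpace α] {C : Set α}
    {y z : α} (hy : y ∈ C) (hz : ∀ c ∈ C, dist y z ≤ dist y c) : z = y :=
  (dist_le_zero.mp ((hz y hy).trans_eq (dist_self y))).symm

theorem setOf_lt_infDist_convexHull_subset {Ω E : Type*} [NormedAddCommGroup E]
    [NormedSpace ℝ E] (X : ℕ → Ω → E) (x : E) (ε : ℝ) (n : ℕ) :
    {ω | ε < infDist x (convexHull ℝ ((fun k => X k ω) '' Set.Iio n))}
      ⊆ ⋂ k ∈ Finset.range n, X k ⁻¹' (closedBall x ε)ᶜ := by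
  intro ω hω
  simp only [Set.mem_iInter, Finset.mem_range, Set.mem_preimage, Set.mem_compl_iff,
    mem_closedBall']
  intro k hk hnear
  have hhull : X k ω ∈ convexHull ℝ ((fun k => X k ω) '' Set.Iio n) :=
    subset_convexHull ℝ _ ⟨k, hk, rfl⟩
  exact (lt_of_lt_of_le hω (infDist_le_dist_of_mem hhull)).not_ge hnear

theorem stmt7_general {Ω : Type*} [MeasurableSpace Ω] (P : Measure Ω) [IsProbabilityMeasure P]
    (m : ℕ) (C : Set (EuclideanSpace ℝ (Fin m)))
    (H X₀ : Ω → EuclideanSpace ℝ (Fin m))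
    -- `X₀` is the metric projection of `H` onto `C`:
    (hproj : ∀ ω, X₀ ω ∈ C ∧ ∀ y ∈ C, dist (H ω) (X₀ ω) ≤ dist (H ω) y)
    (X : ℕ → Ω → EuclideanSpace ℝ (Fin m))
    (hindep : iIndepFun X P)
    (hident : ∀ k, IdentDistrib (X k) X₀ P P)
    (hcharge : ∀ x ∈ interior C, ∀ ε > (0:ℝ),
      0 < P {ω | H ω ∈ closedBall x ε ∩ interior C}) :
    ∀ x ∈ interior C, ∀ ε > (0:ℝ),
      Tendsto
        (fun N : ℕ =>
          P {ω | ε < infDist x (convexHull ℝ ((fun k => X k ω) '' Set.Iio (N + 1)))})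
        atTop (nhds 0) := by
  intro x hx ε hε
  have hpos : 0 < P (X₀ ⁻¹' closedBall x ε) := by
    refine (hcharge x hx ε hε).trans_le (measure_mono fun ω ⟨hnear, hint⟩ => ?_)
    rwa [Set.mem_preimage, eq_of_mem_of_forall_dist_le (interior_subset hint) (hproj ω).2]
  have hmiss := (hindep.tendsto_measure_iInter_preimage_compl hident measurableSet_closedBall
    hpos).comp (tendsto_add_atTop_nat 1)
  exact tendsto_of_tendsto_of_tendsto_of_le_of_le tendsto_const_nhds hmiss (fun _ => zero_le)
    fun N => measure_mono (setOf_lt_infDist_convexHull_subset X x ε (N + 1))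

/-- Let `C` be a convex body of `ℝ^m`, `H` an `ℝ^m`-valued random variable, `X₀ = Π_C(H)`
the metric projection of `H` onto `C`, and `X_1, X_2, …` i.i.d. copies of `X₀`. Let
`Ĉ_N = conv{X_1,…,X_N}`. If `P(H ∈ B̄(x,ε) ∩ int C) > 0` for every `x ∈ int C` and `ε > 0`,
then for every `x ∈ int C`, `d(x, Ĉ_N) → 0` in probability as `N → ∞`. -/
theorem stmt7 {Ω : Type*} [MeasurableSpace Ω] (P : Measure Ω) [IsProbabilityMeasure P]
    (m : ℕ) (C : Set (EuclideanSpace ℝ (Fin m)))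
    (hCcompact : IsCompact C) (hCconvex : Convex ℝ C) (hCint : (interior C).Nonempty)
    (H X₀ : Ω → EuclideanSpace ℝ (Fin m)) (hHm : Measurable H) (hX₀m : Measurable X₀)
    -- `X₀` is the metric projection of `H` onto `C`:
    (hproj : ∀ ω, X₀ ω ∈ C ∧ ∀ y ∈ C, dist (H ω) (X₀ ω) ≤ dist (H ω) y)
    (X : ℕ → Ω → EuclideanSpace ℝ (Fin m)) (hXm : ∀ k, Measurable (X k))
    (hindep : iIndepFun X P)
    (hident : ∀ k, IdentDistrib (X k) X₀ P P)
    (hcharge : ∀ x ∈ interior C, ∀ ε > (0:ℝ),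
      0 < P {ω | H ω ∈ closedBall x ε ∩ interior C}) :
    ∀ x ∈ interior C, ∀ ε > (0:ℝ),
      Tendsto
        (fun N : ℕ =>
          P {ω | ε < infDist x (convexHull ℝ ((fun k => X k ω) '' Set.Iio (N + 1)))})
        atTop (nhds 0) :=
  stmt7_general P m C H X₀ hproj X hindep hident hcharge
end

section
/- Consider the reflected Euler scheme X̄_{j+1} = Π_{C(t_{j+1})}(X̄_j + b(X̄_j)Δ_n + σ(X̄_j)(W_{t_{j+1}} − W_{t_j})) with X̄_0 = x₀ ∈ C(0), where b, σ : ℝ → ℝ are Lipschitz, σ(·) ≥ m_σ > 0 on the relevant compact, W is a one-dimensional Brownian motion, t_j = jT/n, and each C(t) ⊂ [−m_C, m_C] is a compact interval. Then for every j ∈ {1,…,n}, the estimator Ĉ_{N,j} = [min_{i≤N} X̄_j^i, max_{i≤N} X̄_j^i], built from N independent copies X̄^1,…,X̄^N of the scheme, satisfies d_H(Ĉ_{N,j}, C(t_j)) → 0 in probability as N → ∞, where d_H(Ĉ_{N,j}, C(t_j)) = max{sup C(t_j) − max_i X̄_j^i, min_i X̄_j^i − inf C(t_j)}. -/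
/-!
A large Brownian increment pushes the pre-projection value `X̄_j + b(X̄_j)Δ_n + σ(X̄_j)Z` above
`sup C(t_{j+1})` (and a very negative one below `inf C(t_{j+1})`), uniformly in `X̄_j`, because the
scheme never leaves `[-m_C, m_C]`, where `b` is bounded and `σ ≥ m_σ`. The projected value then
sits at the boundary of `C(t_{j+1})`. So the estimator misses a boundary point by more than `ε`
only if all `N + 1` i.i.d. Gaussian increments avoid a fixed half-line, an event of probability
`q ^ (N + 1)` with `q < 1`.
-/

open MeasureTheory ProbabilityTheory Filter Topology
open scoped ENNReal NNReal

section EulerIncrement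

variable {b σ : ℝ → ℝ} {mC B mσ Δ : ℝ}

lemma exists_le_euler_increment (hb : ∀ x, |x| ≤ mC → |b x| ≤ B)
    (hσ : ∀ x, |x| ≤ mC → mσ ≤ σ x) (hmσ : 0 < mσ) (hΔ : 0 ≤ Δ) (c : ℝ) :
    ∃ M, ∀ x z, |x| ≤ mC → M ≤ z → c ≤ x + b x * Δ + σ x * z := by
  refine ⟨max ((c + mC + B * Δ) / mσ) 0, fun x z hx hz => ?_⟩
  have hz0 : 0 ≤ z := (le_max_right _ _).trans hz
  have hcz : c + mC + B * Δ ≤ mσ * z := (div_le_iff₀' hmσ).mp ((le_max_left _ _).trans hz)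
  have hbΔ : -B * Δ ≤ b x * Δ := mul_le_mul_of_nonneg_right (neg_le_of_abs_le (hb x hx)) hΔ
  nlinarith [neg_abs_le x, mul_le_mul_of_nonneg_right (hσ x hx) hz0]

lemma exists_euler_increment_le (hb : ∀ x, |x| ≤ mC → |b x| ≤ B)
    (hσ : ∀ x, |x| ≤ mC → mσ ≤ σ x) (hmσ : 0 < mσ) (hΔ : 0 ≤ Δ) (c : ℝ) :
    ∃ M, ∀ x z, |x| ≤ mC → z ≤ M → x + b x * Δ + σ x * z ≤ c := by
  obtain ⟨M, hM⟩ := exists_le_euler_increment (b := fun x => -b (-x)) (σ := fun x => σ (-x))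
    (fun x hx => by simpa using hb (-x) (by rwa [abs_neg]))
    (fun x hx => hσ (-x) (by rwa [abs_neg])) hmσ hΔ (-c)
  refine ⟨-M, fun x z hx hz => ?_⟩
  have := hM (-x) (-z) (by rwa [abs_neg]) (le_neg.mpr hz)
  simp only [neg_neg] at this
  linarith

end EulerIncrement

lemma Finset.lt_max_sub_sup'_inf'_sub_iff {ι : Type*} {S : Finset ι} (hS : S.Nonempty)
    (f : ι → ℝ) {ε u l : ℝ} :
    ε < max (u - S.sup' hS f) (S.inf' hS f - l) ↔
      (∀ i ∈ S, f i < u - ε) ∨ (∀ i ∈ S, l + ε < f i) := by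
  rw [lt_max_iff, ← Finset.sup'_lt_iff hS, ← Finset.lt_inf'_iff hS]
  constructor <;> rintro (h | h) <;> [left; right; left; right] <;> linarith

lemma setOf_lt_max_sub_sup'_inf'_sub_subset {Ω ι : Type*} {S : Finset ι} (hS : S.Nonempty)
    {Y W : ι → Ω → ℝ} {ε u l M M' : ℝ} (hup : ∀ i ω, M ≤ W i ω → u - ε ≤ Y i ω)
    (hdown : ∀ i ω, W i ω ≤ M' → Y i ω ≤ l + ε) :
    {ω | ε < max (u - S.sup' hS (Y · ω)) (S.inf' hS (Y · ω) - l)} ⊆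
      (⋂ i ∈ S, W i ⁻¹' Set.Iio M) ∪ (⋂ i ∈ S, W i ⁻¹' Set.Ioi M') := by
  intro ω hω
  rw [Set.mem_ofPred_eq, Finset.lt_max_sub_sup'_inf'_sub_iff] at hω
  simp only [Set.mem_union, Set.mem_iInter, Set.mem_preimage, Set.mem_Iio, Set.mem_Ioi]
  exact hω.imp (fun h i hi => lt_of_not_ge fun hz => (h i hi).not_ge (hup i ω hz))
    (fun h i hi => lt_of_not_ge fun hz => (h i hi).not_ge (hdown i ω hz))

namespace ProbabilityTheory

variable {Ω ι β : Type*} [MeasurableSpace Ω] [MeasurableSpace β] {P : Measure Ω}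
  {X : ι → Ω → β} {μ : Measure β} {s : Set β}

lemma iIndepFun.measure_biInter_preimage_eq_pow_s12 (hX : iIndepFun X P)
    (hXm : ∀ i, Measurable (X i)) (hlaw : ∀ i, P.map (X i) = μ) (S : Finset ι)
    (hs : MeasurableSet s) :
    P (⋂ i ∈ S, X i ⁻¹' s) = μ s ^ S.card := by
  rw [hX.meas_biInter fun i _ => ⟨s, hs, rfl⟩]
  simp_rw [← Measure.map_apply (hXm _) hs, hlaw, Finset.prod_const]

lemma iIndepFun.tendsto_measure_biInter_preimage_range {X : ℕ → Ω → β} (hX : iIndepFun X P)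
    (hXm : ∀ i, Measurable (X i)) (hlaw : ∀ i, P.map (X i) = μ) (hs : MeasurableSet s)
    (hμs : μ s < 1) :
    Tendsto (fun N => P (⋂ i ∈ Finset.range (N + 1), X i ⁻¹' s)) atTop (𝓝 0) := by
  simp_rw [hX.measure_biInter_preimage_eq_pow_s12 hXm hlaw _ hs, Finset.card_range]
  exact (ENNReal.tendsto_pow_atTop_nhds_zero_of_lt_one hμs).comp (tendsto_add_atTop_nat 1)

lemma gaussianReal_lt_one_of_volume_compl_ne_zero {m : ℝ} {v : ℝ≥0} (hv : v ≠ 0) {s : Set ℝ}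
    (hs : MeasurableSet s) (hsc : volume sᶜ ≠ 0) :
    gaussianReal m v s < 1 := by
  have hpos : gaussianReal m v sᶜ ≠ 0 := fun h => hsc (gaussianReal_absolutelyContinuous' m hv h)
  rw [prob_compl_eq_one_sub hs] at hpos
  exact tsub_pos_iff_lt.mp (pos_iff_ne_zero.mpr hpos)

end ProbabilityTheory

theorem stmt12_general {Ω : Type*} [MeasurableSpace Ω] (P : Measure Ω) [IsProbabilityMeasure P]
    (T : ℝ) (hT : 0 < T) (n : ℕ) (hn : 0 < n)
    (t : ℕ → ℝ)
    (l u : ℝ → ℝ) (hlu : ∀ s, l s ≤ u s)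
    (mC : ℝ) (hCbound : ∀ s, Set.Icc (l s) (u s) ⊆ Set.Icc (-mC) mC)
    (b σ : ℝ → ℝ) (Kb : NNReal) (hb : LipschitzWith Kb b)
    (mσ : ℝ) (hmσ : 0 < mσ) (hσpos : ∀ v, |v| ≤ mC → mσ ≤ σ v)
    (x₀ : ℝ) (hx₀ : x₀ ∈ Set.Icc (l 0) (u 0))
    -- the Brownian increments of the `N` independent copies of the scheme
    (Z : ℕ → ℕ → Ω → ℝ) (hZm : ∀ i j, Measurable (Z i j))
    (hZindep : iIndepFun
      (fun (p : ℕ × ℕ) ω => Z p.1 p.2 ω) P)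
    (hZlaw : ∀ i j, P.map (Z i j) = gaussianReal 0 (T / n).toNNReal)
    -- the `N` independent copies of the reflected Euler scheme
    (Xb : ℕ → ℕ → Ω → ℝ) (hXb0 : ∀ i ω, Xb i 0 ω = x₀)
    (hXbrec : ∀ i j ω, Xb i (j + 1) ω =
      min (max (Xb i j ω + b (Xb i j ω) * (T / n) + σ (Xb i j ω) * Z i j ω)
        (l (t (j + 1)))) (u (t (j + 1)))) :
    ∀ j, 1 ≤ j → j ≤ n → ∀ ε > (0:ℝ),
      Tendsto
        (fun N : ℕ =>
          P {ω | ε < max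
            (u (t j) -
              (Finset.range (N + 1)).sup' Finset.nonempty_range_add_one (fun i => Xb i j ω))
            ((Finset.range (N + 1)).inf' Finset.nonempty_range_add_one (fun i => Xb i j ω) -
              l (t j))})
        atTop (nhds 0) := by
  intro j hj1 _ ε hε
  obtain ⟨k, rfl⟩ : ∃ k, j = k + 1 := ⟨j - 1, by omega⟩
  have hΔ : 0 < T / n := by positivity
  have hX : ∀ i m ω, |Xb i m ω| ≤ mC := by
    rintro i (_ | m) ω
    · exact abs_le.mpr (hCbound 0 (hXb0 i ω ▸ hx₀))
    · rw [hXbrec]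
      exact abs_le.mpr (hCbound _ ⟨le_min (le_max_right _ _) (hlu _), min_le_right _ _⟩)
  obtain ⟨B, hB⟩ := (isCompact_Icc (a := -mC) (b := mC)).exists_bound_of_continuousOn
    hb.continuous.continuousOn
  have hbB : ∀ x, |x| ≤ mC → |b x| ≤ B := fun x hx => hB x (abs_le.mp hx)
  obtain ⟨M, hM⟩ := exists_le_euler_increment hbB hσpos hmσ hΔ.le (u (t (k + 1)) - ε)
  obtain ⟨M', hM'⟩ := exists_euler_increment_le hbB hσpos hmσ hΔ.le (l (t (k + 1)) + ε)
  have hup : ∀ i ω, M ≤ Z i k ω → u (t (k + 1)) - ε ≤ Xb i (k + 1) ω := fun i ω hz => by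
    rw [hXbrec]
    exact le_min ((hM _ _ (hX i k ω) hz).trans (le_max_left _ _)) (by linarith)
  have hdown : ∀ i ω, Z i k ω ≤ M' → Xb i (k + 1) ω ≤ l (t (k + 1)) + ε := fun i ω hz => by
    rw [hXbrec]
    exact (min_le_left _ _).trans (max_le (hM' _ _ (hX i k ω) hz) (by linarith))
  have hv : (T / n).toNNReal ≠ 0 := (Real.toNNReal_pos.mpr hΔ).ne'
  have hZk : iIndepFun (fun i => Z i k) P :=
    hZindep.precomp (g := fun i => (i, k)) fun _ _ h => congrArg Prod.fst h
  have hallBelow := hZk.tendsto_measure_biInter_preimage_range (hZm · k) (hZlaw · k)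
    (measurableSet_Iio (a := M))
    (gaussianReal_lt_one_of_volume_compl_ne_zero hv measurableSet_Iio (by simp))
  have hallAbove := hZk.tendsto_measure_biInter_preimage_range (hZm · k) (hZlaw · k)
    (measurableSet_Ioi (a := M'))
    (gaussianReal_lt_one_of_volume_compl_ne_zero hv measurableSet_Ioi (by simp))
  exact tendsto_of_tendsto_of_tendsto_of_le_of_le tendsto_const_nhds
    (by simpa using hallBelow.add hallAbove) (fun _ => zero_le)
    fun N => (measure_mono (setOf_lt_max_sub_sup'_inf'_sub_subset _ hup hdown)).trans
      (measure_union_le _ _)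

/-- One-dimensional reflected Euler scheme
`X̄_{j+1} = Π_{C(t_{j+1})}(X̄_j + b(X̄_j)Δ_n + σ(X̄_j)(W_{t_{j+1}} − W_{t_j}))`, `X̄_0 = x₀ ∈ C(0)`,
with `b, σ` Lipschitz, `σ ≥ m_σ > 0` on the relevant compact, `t_j = jT/n`, and each
`C(t) = [l(t),u(t)] ⊆ [−m_C, m_C]` a compact interval. The Brownian increments
`Z_{j+1} = W_{t_{j+1}} − W_{t_j}` are independent `N(0, T/n)` Gaussians (independent across the
`N` copies of the scheme as well). Then for every `j ∈ {1,…,n}`, the estimator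
`Ĉ_{N,j} = [min_{i≤N} X̄_j^i, max_{i≤N} X̄_j^i]` satisfies
`d_H(Ĉ_{N,j}, C(t_j)) = max{u(t_j) − max_i X̄_j^i, min_i X̄_j^i − l(t_j)} → 0` in probability. -/
theorem stmt12 {Ω : Type*} [MeasurableSpace Ω] (P : Measure Ω) [IsProbabilityMeasure P]
    (T : ℝ) (hT : 0 < T) (n : ℕ) (hn : 0 < n)
    (t : ℕ → ℝ) (ht : ∀ j, t j = j * (T / n))
    (l u : ℝ → ℝ) (hlu : ∀ s, l s ≤ u s)
    (mC : ℝ) (hmC : 0 < mC) (hCbound : ∀ s, Set.Icc (l s) (u s) ⊆ Set.Icc (-mC) mC)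
    (b σ : ℝ → ℝ) (Kb Kσ : NNReal) (hb : LipschitzWith Kb b) (hσ : LipschitzWith Kσ σ)
    (mσ : ℝ) (hmσ : 0 < mσ) (hσpos : ∀ v, |v| ≤ mC → mσ ≤ σ v)
    (x₀ : ℝ) (hx₀ : x₀ ∈ Set.Icc (l 0) (u 0))
    -- the Brownian increments of the `N` independent copies of the scheme
    (Z : ℕ → ℕ → Ω → ℝ) (hZm : ∀ i j, Measurable (Z i j))
    (hZindep : iIndepFun
      (fun (p : ℕ × ℕ) ω => Z p.1 p.2 ω) P)
    (hZlaw : ∀ i j, P.map (Z i j) = gaussianReal 0 (T / n).toNNReal)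
    -- the `N` independent copies of the reflected Euler scheme
    (Xb : ℕ → ℕ → Ω → ℝ) (hXb0 : ∀ i ω, Xb i 0 ω = x₀)
    (hXbrec : ∀ i j ω, Xb i (j + 1) ω =
      min (max (Xb i j ω + b (Xb i j ω) * (T / n) + σ (Xb i j ω) * Z i j ω)
        (l (t (j + 1)))) (u (t (j + 1)))) :
    ∀ j, 1 ≤ j → j ≤ n → ∀ ε > (0:ℝ),
      Tendsto
        (fun N : ℕ =>
          P {ω | ε < max
            (u (t j) -
              (Finset.range (N + 1)).sup' Finset.nonempty_range_add_one (fun i => Xb i j ω))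
            ((Finset.range (N + 1)).inf' Finset.nonempty_range_add_one (fun i => Xb i j ω) -
              l (t j))})
        atTop (nhds 0) :=
  stmt12_general P T hT n hn t l u hlu mC hCbound b σ Kb hb mσ hmσ hσpos x₀ hx₀ Z hZm hZindep hZlaw
    Xb hXb0 hXbrec
end

section
/- In the setting of the one-dimensional reflected Euler scheme with constant diffusion coefficient σ(·) ≡ s > 0, the estimator Ĉ_{N,j} satisfies N·d_H(Ĉ_{N,j}, C(t_j)) → 0 in probability as N → ∞, for every j ∈ {1,…,n}. -/
open MeasureTheory ProbabilityTheory Filter Topology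

/-!
Before step `j` the scheme lies in `[-m_C, m_C]`, so the drifted state `X̄ + b(X̄)Δ` is bounded
by a constant `K`. A Gaussian increment `Z ≥ (u(t_j) + K)/s` therefore pushes the copy past the
upper boundary, and the projection puts it exactly at `u(t_j)`; likewise at `l(t_j)`. These
events have a probability `p > 0` that does not depend on the copy, and the increments of
different copies are independent, so `d_H(Ĉ_{N,j}, C(t_j)) > 0` has probability at most
`2(1 - p)^N`, which tends to zero.
-/

lemma forall_lt_or_forall_lt_of_pos_max {ι α : Type*} [AddCommGroup α] [LinearOrder α]
    [IsOrderedAddMonoid α] {s : Finset ι} (hs : s.Nonempty) (f : ι → α) {a b : α}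
    (h : 0 < max (a - s.sup' hs f) (s.inf' hs f - b)) :
    (∀ i ∈ s, f i < a) ∨ (∀ i ∈ s, b < f i) := by
  rcases lt_max_iff.mp h with h | h
  · exact .inl ((Finset.sup'_lt_iff hs).mp (sub_pos.mp h))
  · exact .inr ((Finset.lt_inf'_iff hs).mp (sub_pos.mp h))

lemma lt_div_of_min_max_add_mul_lt {x z lo hi K s : ℝ} (hx : |x| ≤ K) (hs : 0 < s)
    (h : min (max (x + s * z) lo) hi < hi) : z < (hi + K) / s := by
  have : x + s * z < hi :=
    (le_max_left _ _).trans_lt ((min_lt_iff.mp h).resolve_right (lt_irrefl _))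
  rw [lt_div_iff₀' hs]
  linarith [neg_abs_le x]

lemma div_lt_of_lt_min_max_add_mul {x z lo hi K s : ℝ} (hx : |x| ≤ K) (hs : 0 < s)
    (h : lo < min (max (x + s * z) lo) hi) : (lo - K) / s < z := by
  have : lo < x + s * z := (lt_max_iff.mp (lt_min_iff.mp h).1).resolve_right (lt_irrefl _)
  rw [div_lt_iff₀' hs]
  linarith [le_abs_self x]

lemma gaussianReal_lt_one {μ : ℝ} {v : NNReal} (hv : v ≠ 0) {s : Set ℝ}
    (hs : MeasurableSet s) (hvol : volume sᶜ ≠ 0) : gaussianReal μ v s < 1 := by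
  have : 0 < gaussianReal μ v sᶜ :=
    pos_iff_ne_zero.mpr fun h ↦ hvol (gaussianReal_absolutelyContinuous' μ hv h)
  simpa using prob_compl_lt_one_sub_of_lt_prob this hs.compl

lemma measure_biInter_range_preimage_eq_pow {Ω α : Type*} [MeasurableSpace Ω]
    [MeasurableSpace α] {P : Measure Ω} {Y : ℕ → Ω → α} (hY : iIndepFun Y P)
    (hYm : ∀ i, Measurable (Y i)) {μ : Measure α} (hlaw : ∀ i, P.map (Y i) = μ)
    {D : Set α} (hD : MeasurableSet D) (N : ℕ) :
    P (⋂ i ∈ Finset.range N, Y i ⁻¹' D) = μ D ^ N := by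
  rw [hY.meas_biInter fun i _ ↦ ⟨D, hD, rfl⟩]
  simp_rw [← Measure.map_apply (hYm _) hD, hlaw, Finset.prod_const, Finset.card_range]

lemma tendsto_measure_biInter_range_preimage {Ω α : Type*} [MeasurableSpace Ω]
    [MeasurableSpace α] {P : Measure Ω} {Y : ℕ → Ω → α} (hY : iIndepFun Y P)
    (hYm : ∀ i, Measurable (Y i)) {μ : Measure α} (hlaw : ∀ i, P.map (Y i) = μ)
    {D : Set α} (hD : MeasurableSet D) (hμD : μ D < 1) :
    Tendsto (fun N ↦ P (⋂ i ∈ Finset.range N, Y i ⁻¹' D)) atTop (𝓝 0) := by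
  simpa only [measure_biInter_range_preimage_eq_pow hY hYm hlaw hD]
    using ENNReal.tendsto_pow_atTop_nhds_zero_of_lt_one hμD

theorem stmt13_general {Ω : Type*} [MeasurableSpace Ω] (P : Measure Ω)
    (T : ℝ) (hT : 0 < T) (n : ℕ) (hn : 0 < n)
    (t : ℕ → ℝ)
    (l u : ℝ → ℝ) (hlu : ∀ s', l s' ≤ u s')
    (mC : ℝ) (hCbound : ∀ s', Set.Icc (l s') (u s') ⊆ Set.Icc (-mC) mC)
    (b : ℝ → ℝ) (Kb : NNReal) (hb : LipschitzWith Kb b)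
    (s : ℝ) (hs : 0 < s)
    (x₀ : ℝ) (hx₀ : x₀ ∈ Set.Icc (l 0) (u 0))
    -- the Brownian increments of the `N` independent copies of the scheme
    (Z : ℕ → ℕ → Ω → ℝ) (hZm : ∀ i j, Measurable (Z i j))
    (hZindep : iIndepFun
      (fun (p : ℕ × ℕ) ω => Z p.1 p.2 ω) P)
    (hZlaw : ∀ i j, P.map (Z i j) = gaussianReal 0 (T / n).toNNReal)
    -- the `N` independent copies of the reflected Euler scheme
    (Xb : ℕ → ℕ → Ω → ℝ) (hXb0 : ∀ i ω, Xb i 0 ω = x₀)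
    (hXbrec : ∀ i j ω, Xb i (j + 1) ω =
      min (max (Xb i j ω + b (Xb i j ω) * (T / n) + s * Z i j ω)
        (l (t (j + 1)))) (u (t (j + 1)))) :
    ∀ j, 1 ≤ j → j ≤ n → ∀ ε > (0:ℝ),
      Tendsto
        (fun N : ℕ =>
          P {ω | ε < ((N:ℝ) + 1) * max
            (u (t j) -
              (Finset.range (N + 1)).sup' Finset.nonempty_range_add_one (fun i => Xb i j ω))
            ((Finset.range (N + 1)).inf' Finset.nonempty_range_add_one (fun i => Xb i j ω) -
              l (t j))})
        atTop (nhds 0) := by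
  intro j hj _ ε hε
  obtain ⟨m, rfl⟩ := Nat.exists_eq_add_of_le' hj
  have hv : (T / n).toNNReal ≠ 0 := (Real.toNNReal_pos.mpr (by positivity)).ne'
  have hXC : ∀ i k ω, Xb i k ω ∈ Set.Icc (-mC) mC := by
    rintro i (_ | k) ω
    · exact hCbound 0 (hXb0 i ω ▸ hx₀)
    · rw [hXbrec]
      exact hCbound _ ⟨le_min (le_max_right _ _) (hlu _), min_le_right _ _⟩
  obtain ⟨K, hK⟩ := isCompact_Icc.exists_bound_of_continuousOn
    (f := fun x ↦ x + b x * (T / n)) (by have := hb.continuous; fun_prop)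
  simp only [Real.norm_eq_abs] at hK
  set cu := (u (t (m + 1)) + K) / s
  set cl := (l (t (m + 1)) - K) / s
  have hup : ∀ i ω, Xb i (m + 1) ω < u (t (m + 1)) → Z i m ω < cu := fun i ω h ↦
    lt_div_of_min_max_add_mul_lt (hK _ (hXC i m ω)) hs (hXbrec i m ω ▸ h)
  have hlow : ∀ i ω, l (t (m + 1)) < Xb i (m + 1) ω → cl < Z i m ω := fun i ω h ↦
    div_lt_of_lt_min_max_add_mul (hK _ (hXC i m ω)) hs (hXbrec i m ω ▸ h)
  have hZ : iIndepFun (fun i ↦ Z i m) P :=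
    hZindep.precomp (g := fun i ↦ (i, m)) fun _ _ h ↦ (Prod.mk.inj h).1
  have hu := tendsto_measure_biInter_range_preimage hZ (hZm · m) (hlaw := (hZlaw · m))
    (measurableSet_Iio (a := cu)) (gaussianReal_lt_one hv measurableSet_Iio (by simp))
  have hl := tendsto_measure_biInter_range_preimage hZ (hZm · m) (hlaw := (hZlaw · m))
    (measurableSet_Ioi (a := cl)) (gaussianReal_lt_one hv measurableSet_Ioi (by simp))
  have hsum := (hu.add hl).comp (tendsto_add_atTop_nat 1)
  rw [add_zero] at hsum
  refine tendsto_of_tendsto_of_tendsto_of_le_of_le tendsto_const_nhds hsum (fun _ ↦ zero_le)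
    fun N ↦ ?_
  refine (measure_mono fun ω hω ↦ ?_).trans (measure_union_le _ _)
  have hpos := pos_of_mul_pos_right (hε.trans hω) (by positivity)
  rcases forall_lt_or_forall_lt_of_pos_max _ _ hpos with h | h
  · exact .inl (Set.mem_biInter fun i hi ↦ hup i ω (h i hi))
  · exact .inr (Set.mem_biInter fun i hi ↦ hlow i ω (h i hi))

/-- One-dimensional reflected Euler scheme with constant diffusion coefficient
`σ(·) ≡ s > 0`: `X̄_{j+1} = Π_{C(t_{j+1})}(X̄_j + b(X̄_j)Δ_n + s(W_{t_{j+1}} − W_{t_j}))`,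
`X̄_0 = x₀ ∈ C(0)`, with `b` Lipschitz, `t_j = jT/n`, and each
`C(t) = [l(t),u(t)] ⊆ [−m_C, m_C]` a compact interval. Then for every `j ∈ {1,…,n}`,
`N · d_H(Ĉ_{N,j}, C(t_j)) → 0` in probability as `N → ∞`, where
`Ĉ_{N,j}` is the interval spanned by the `j`-th step of `N` independent copies. -/
theorem stmt13 {Ω : Type*} [MeasurableSpace Ω] (P : Measure Ω) [IsProbabilityMeasure P]
    (T : ℝ) (hT : 0 < T) (n : ℕ) (hn : 0 < n)
    (t : ℕ → ℝ) (ht : ∀ j, t j = j * (T / n))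
    (l u : ℝ → ℝ) (hlu : ∀ s', l s' ≤ u s')
    (mC : ℝ) (hmC : 0 < mC) (hCbound : ∀ s', Set.Icc (l s') (u s') ⊆ Set.Icc (-mC) mC)
    (b : ℝ → ℝ) (Kb : NNReal) (hb : LipschitzWith Kb b)
    (s : ℝ) (hs : 0 < s)
    (x₀ : ℝ) (hx₀ : x₀ ∈ Set.Icc (l 0) (u 0))
    -- the Brownian increments of the `N` independent copies of the scheme
    (Z : ℕ → ℕ → Ω → ℝ) (hZm : ∀ i j, Measurable (Z i j))
    (hZindep : iIndepFun
      (fun (p : ℕ × ℕ) ω => Z p.1 p.2 ω) P)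
    (hZlaw : ∀ i j, P.map (Z i j) = gaussianReal 0 (T / n).toNNReal)
    -- the `N` independent copies of the reflected Euler scheme
    (Xb : ℕ → ℕ → Ω → ℝ) (hXb0 : ∀ i ω, Xb i 0 ω = x₀)
    (hXbrec : ∀ i j ω, Xb i (j + 1) ω =
      min (max (Xb i j ω + b (Xb i j ω) * (T / n) + s * Z i j ω)
        (l (t (j + 1)))) (u (t (j + 1)))) :
    ∀ j, 1 ≤ j → j ≤ n → ∀ ε > (0:ℝ),
      Tendsto
        (fun N : ℕ =>
          P {ω | ε < ((N:ℝ) + 1) * max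
            (u (t j) -
              (Finset.range (N + 1)).sup' Finset.nonempty_range_add_one (fun i => Xb i j ω))
            ((Finset.range (N + 1)).inf' Finset.nonempty_range_add_one (fun i => Xb i j ω) -
              l (t j))})
        atTop (nhds 0) :=
  stmt13_general P T hT n hn t l u hlu mC hCbound b Kb hb s hs x₀ hx₀ Z hZm hZindep hZlaw Xb hXb0
    hXbrec
end

section
/- Consider the reflected Euler scheme in ℝ^m: X̄_{j+1} = Π_{C(t_{j+1})}(X̄_j + b(X̄_j)Δ_n + σ(X̄_j)(W_{t_{j+1}} − W_{t_j})), X̄_0 = x₀ ∈ C(0), with b : ℝ^m → ℝ^m and σ : ℝ^m → GL_m(ℝ) Lipschitz, W an m-dimensional Brownian motion, and C(t) convex bodies with C(t) ⊂ C(s) for t ≥ s. Let H_j = X̄_{j−1} + b(X̄_{j−1})Δ_n + σ(X̄_{j−1})(W_{t_j} − W_{t_{j−1}}). Then for every j ∈ {1,…,n}, every x ∈ int(C(t_j)), and every ε > 0, P(H_j ∈ B̄(x,ε) ∩ int(C(t_j))) > 0. -/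
/-! Write `H_j = g(X̄_{j-1}, Z_{j-1})` with `g(y, z) = y + Δ b(y) + σ(y) z`. Since the metric
projection onto a convex set is 1-Lipschitz, `X̄_{j-1}` is a measurable function of the increments
`Z_0, …, Z_{j-2}`, hence independent of `Z_{j-1}`, so the joint law of `(X̄_{j-1}, Z_{j-1})` is a
product. The Gaussian law of `Z_{j-1}` charges every open set, so `(y, z)` lies in the support of
the joint law for any `y` in the (nonempty) support of `X̄_{j-1}` and any `z`. As `σ(y)` is
invertible, `g(y, ·)` is onto, so every `x` lies in the support of the law of `H_j`; and
`B̄(x, ε) ∩ int C(t_j)` is a neighbourhood of `x` when `x ∈ int C(t_j)`. -/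

open MeasureTheory ProbabilityTheory Filter Metric Topology

theorem inner_sub_sub_nonpos_of_forall_dist_le {F : Type*} [NormedAddCommGroup F]
    [InnerProductSpace ℝ F] {K : Set F} (hK : Convex ℝ K) {x p : F} (hp : p ∈ K)
    (hmin : ∀ w ∈ K, dist x p ≤ dist x w) {w : F} (hw : w ∈ K) :
    inner ℝ (x - p) (w - p) ≤ 0 := by
  have : Nonempty K := ⟨⟨p, hp⟩⟩
  refine (norm_eq_iInf_iff_real_inner_le_zero hK hp).mp (le_antisymm ?_ ?_) w hw
  · exact le_ciInf fun w => by simpa only [dist_eq_norm] using hmin w w.2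
  · exact ciInf_le ⟨0, by rintro _ ⟨w, rfl⟩; positivity⟩ (⟨p, hp⟩ : K)

theorem lipschitzWith_one_of_forall_dist_le {F : Type*} [NormedAddCommGroup F]
    [InnerProductSpace ℝ F] {K : Set F} (hK : Convex ℝ K) {p : F → F}
    (hp : ∀ x, p x ∈ K ∧ ∀ y ∈ K, dist x (p x) ≤ dist x y) :
    LipschitzWith 1 p := by
  refine LipschitzWith.mk_one fun x y => ?_
  have hx := inner_sub_sub_nonpos_of_forall_dist_le hK (hp x).1 (hp x).2 (hp y).1
  have hy := inner_sub_sub_nonpos_of_forall_dist_le hK (hp y).1 (hp y).2 (hp x).1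
  have hsq : ‖p x - p y‖ ^ 2 ≤ ‖x - y‖ * ‖p x - p y‖ := calc
    ‖p x - p y‖ ^ 2 = inner ℝ (x - y) (p x - p y) + inner ℝ (x - p x) (p y - p x)
        + inner ℝ (y - p y) (p x - p y) := by
      rw [← real_inner_self_eq_norm_sq, ← neg_sub (p x) (p y), inner_neg_right,
        ← sub_eq_add_neg, ← inner_sub_left, ← inner_add_left]
      congr 1
      abel
    _ ≤ ‖x - y‖ * ‖p x - p y‖ := by linarith [real_inner_le_norm (x - y) (p x - p y)]
  rw [dist_eq_norm, dist_eq_norm]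
  nlinarith [norm_nonneg (p x - p y), norm_nonneg (x - y)]

theorem MeasureTheory.Measure.mem_support_map {X Y : Type*} [TopologicalSpace X]
    [MeasurableSpace X] [TopologicalSpace Y] [MeasurableSpace Y] {μ : Measure X} {f : X → Y}
    (hf : AEMeasurable f μ) {x : X} (hfx : ContinuousAt f x) (hx : x ∈ μ.support) :
    f x ∈ (μ.map f).support := by
  rw [Measure.mem_support_iff_forall] at hx ⊢
  exact fun U hU => (hx _ (hfx hU)).trans_le (Measure.le_map_apply hf U)

theorem MeasureTheory.Measure.mem_support_prod {X Y : Type*} [TopologicalSpace X]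
    [MeasurableSpace X] [TopologicalSpace Y] [MeasurableSpace Y] {μ : Measure X}
    {ν : Measure Y} [SFinite ν] {x : X} {y : Y} (hx : x ∈ μ.support) (hy : y ∈ ν.support) :
    (x, y) ∈ (μ.prod ν).support := by
  rw [Measure.mem_support_iff_forall] at hx hy ⊢
  intro U hU
  obtain ⟨s, hs, t, ht, hst⟩ := mem_nhds_prod_iff.mp hU
  calc 0 < μ s * ν t := ENNReal.mul_pos (hx s hs).ne' (hy t ht).ne'
    _ = μ.prod ν (s ×ˢ t) := (Measure.prod_prod s t).symm
    _ ≤ μ.prod ν U := measure_mono hst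

theorem ProbabilityTheory.IndepFun.measure_preimage_pos {Ω E F G : Type*} [MeasurableSpace Ω]
    {P : Measure Ω} [IsFiniteMeasure P]
    [TopologicalSpace E] [MeasurableSpace E] [TopologicalSpace F] [MeasurableSpace F]
    [TopologicalSpace G] [MeasurableSpace G]
    {Y : Ω → E} {Z : Ω → F} (hYZ : IndepFun Y Z P) (hY : Measurable Y) (hZ : Measurable Z)
    {f : E × F → G} (hf : Measurable f) {y : E} {z : F} (hfyz : ContinuousAt f (y, z))
    (hy : y ∈ (P.map Y).support) (hz : z ∈ (P.map Z).support)
    {U : Set G} (hU : U ∈ 𝓝 (f (y, z))) (hUm : MeasurableSet U) :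
    0 < P {ω | f (Y ω, Z ω) ∈ U} := by
  have hlaw : P.map (fun ω => (Y ω, Z ω)) = (P.map Y).prod (P.map Z) :=
    (indepFun_iff_map_prod_eq_prod_map_map hY.aemeasurable hZ.aemeasurable).mp hYZ
  have hsupp : f (y, z) ∈ (P.map (f ∘ fun ω => (Y ω, Z ω))).support := by
    rw [← Measure.map_map hf (hY.prodMk hZ), hlaw]
    exact Measure.mem_support_map hf.aemeasurable hfyz (Measure.mem_support_prod hy hz)
  have hpos := (Measure.mem_support_iff_forall _).mp hsupp U hU
  rwa [Measure.map_apply (hf.comp (hY.prodMk hZ)) hUm] at hpos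

theorem isOpenPosMeasure_map_of_iIndepFun {Ω ι : Type*} [MeasurableSpace Ω] {P : Measure Ω}
    [Fintype ι] {Z : Ω → EuclideanSpace ℝ ι} (hZ : Measurable Z)
    (hind : iIndepFun (fun k ω => Z ω k) P)
    (hlaw : ∀ k, (P.map fun ω => Z ω k).IsOpenPosMeasure) : (P.map Z).IsOpenPosMeasure := by
  have hcoord : Measurable fun ω k => Z ω k := (WithLp.measurable_ofLp 2 _).comp hZ
  have hpi : P.map (fun ω k => Z ω k) = Measure.pi fun k => P.map fun ω => Z ω k :=
    hind.map_fun_eq_pi_map fun k => (measurable_pi_apply k).comp hcoord |>.aemeasurable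
  have hmap : P.map Z = (P.map fun ω k => Z ω k).map (WithLp.toLp 2) := by
    rw [Measure.map_map (WithLp.measurable_toLp 2 _) hcoord]; rfl
  have := hind.isProbabilityMeasure
  rw [hmap, hpi]
  exact (PiLp.continuous_toLp 2 _).isOpenPosMeasure_map (WithLp.toLp_surjective 2)

section CoordMeasurableSpace

variable {Ω κ ι : Type*} (Z : κ → Ω → EuclideanSpace ℝ ι)

abbrev coordMeasurableSpace (S : Set κ) : MeasurableSpace Ω :=
  ⨆ p ∈ {p : κ × ι | p.1 ∈ S}, MeasurableSpace.comap (fun ω => Z p.1 ω p.2) inferInstance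

variable {Z}

theorem coordMeasurableSpace_mono {S T : Set κ} (hST : S ⊆ T) :
    coordMeasurableSpace Z S ≤ coordMeasurableSpace Z T :=
  biSup_mono fun _ hp => hST hp

theorem measurable_coordMeasurableSpace {S : Set κ} {i : κ} (hi : i ∈ S) :
    Measurable[coordMeasurableSpace Z S] (Z i) := by
  let := coordMeasurableSpace Z S
  exact (WithLp.measurable_toLp 2 _).comp <| measurable_pi_lambda _ fun k =>
    (comap_measurable _).mono (le_iSup₂_of_le (i, k) hi le_rfl) le_rfl

theorem coordMeasurableSpace_le [MeasurableSpace Ω] (hZ : ∀ i, Measurable (Z i)) {S : Set κ} :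
    coordMeasurableSpace Z S ≤ ‹MeasurableSpace Ω› :=
  iSup₂_le fun p _ => (by fun_prop : Measurable fun ω => Z p.1 ω p.2).comap_le

theorem indepFun_of_measurable_coordMeasurableSpace [MeasurableSpace Ω] {P : Measure Ω}
    (hind : iIndepFun (fun (p : κ × ι) ω => Z p.1 ω p.2) P) (hZ : ∀ i, Measurable (Z i))
    {I J : Set κ} (hIJ : Disjoint I J) {β γ : Type*} [MeasurableSpace β] [MeasurableSpace γ]
    {X : Ω → β} {Y : Ω → γ} (hX : Measurable[coordMeasurableSpace Z I] X)
    (hY : Measurable[coordMeasurableSpace Z J] Y) : IndepFun X Y P := by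
  have hindep := indep_iSup_of_disjoint
    (fun p => (by fun_prop : Measurable fun ω => Z p.1 ω p.2).comap_le)
    ((iIndepFun_iff_iIndep _ _ _).mp hind)
    (S := {p : κ × ι | p.1 ∈ I}) (T := {p | p.1 ∈ J})
    (Set.disjoint_left.mpr fun _ hpI hpJ => Set.disjoint_left.mp hIJ hpI hpJ)
  exact indep_of_indep_of_le_right (indep_of_indep_of_le_left hindep hX.comap_le) hY.comap_le

end CoordMeasurableSpace

theorem measurable_coordMeasurableSpace_of_recursion {Ω ι E : Type*} [MeasurableSpace E]
    {Z : ℕ → Ω → EuclideanSpace ℝ ι} {X : ℕ → Ω → E} {x₀ : E}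
    {F : ℕ → E × EuclideanSpace ℝ ι → E} (hF : ∀ j, Measurable (F j))
    (hX0 : ∀ ω, X 0 ω = x₀) (hX : ∀ j ω, X (j + 1) ω = F j (X j ω, Z j ω)) (j : ℕ) :
    Measurable[coordMeasurableSpace Z (Set.Iio j)] (X j) := by
  induction j with
  | zero => simpa only [funext hX0] using measurable_const
  | succ j ih =>
    rw [funext (hX j)]
    refine (hF j).comp (Measurable.prodMk ?_ ?_)
    · exact ih.mono (coordMeasurableSpace_mono (Set.Iio_subset_Iio j.le_succ)) le_rfl
    · exact measurable_coordMeasurableSpace (Set.mem_Iio.mpr j.lt_succ_self)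

theorem stmt14_general {Ω : Type*} [MeasurableSpace Ω] (P : Measure Ω) [IsProbabilityMeasure P]
    (m : ℕ) (T : ℝ) (hT : 0 < T) (n : ℕ) (hn : 0 < n)
    (t : ℕ → ℝ)
    (C : ℝ → Set (EuclideanSpace ℝ (Fin m)))
    (hCconvex : ∀ s, Convex ℝ (C s))
    (b : EuclideanSpace ℝ (Fin m) → EuclideanSpace ℝ (Fin m))
    (σ : EuclideanSpace ℝ (Fin m) →
      (EuclideanSpace ℝ (Fin m) ≃L[ℝ] EuclideanSpace ℝ (Fin m)))
    (Kb Kσ : NNReal) (hb : LipschitzWith Kb b)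
    (hσ : LipschitzWith Kσ fun v =>
      (σ v : EuclideanSpace ℝ (Fin m) →L[ℝ] EuclideanSpace ℝ (Fin m)))
    -- `Pr s` is the metric projection onto the convex body `C s`
    (Pr : ℝ → EuclideanSpace ℝ (Fin m) → EuclideanSpace ℝ (Fin m))
    (hPr : ∀ s x, Pr s x ∈ C s ∧ ∀ y ∈ C s, dist x (Pr s x) ≤ dist x y)
    (x₀ : EuclideanSpace ℝ (Fin m))
    -- the Brownian increments `Z_j = W_{t_{j+1}} − W_{t_j}`
    (Z : ℕ → Ω → EuclideanSpace ℝ (Fin m)) (hZm : ∀ j, Measurable (Z j))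
    (hZindep : iIndepFun
      (fun (p : ℕ × Fin m) ω => Z p.1 ω p.2) P)
    (hZlaw : ∀ j k, P.map (fun ω => Z j ω k) = gaussianReal 0 (T / n).toNNReal)
    -- the reflected Euler scheme
    (Xb : ℕ → Ω → EuclideanSpace ℝ (Fin m)) (hXb0 : ∀ ω, Xb 0 ω = x₀)
    (hXbrec : ∀ j ω, Xb (j + 1) ω =
      Pr (t (j + 1)) (Xb j ω + (T / n) • b (Xb j ω) + σ (Xb j ω) (Z j ω))) :
    ∀ j, 1 ≤ j → j ≤ n →
      ∀ x ∈ interior (C (t j)), ∀ ε > (0:ℝ),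
        0 < P {ω | Xb (j - 1) ω + (T / n) • b (Xb (j - 1) ω) + σ (Xb (j - 1) ω) (Z (j - 1) ω)
          ∈ closedBall x ε ∩ interior (C (t j))} := by
  intro j _ _ x hx ε hε
  have hΔ : (T / n).toNNReal ≠ 0 :=
    (Real.toNNReal_pos.mpr (div_pos hT (by exact_mod_cast hn))).ne'
  have hstep : Continuous fun p : EuclideanSpace ℝ (Fin m) × EuclideanSpace ℝ (Fin m) =>
      p.1 + (T / n) • b p.1 + σ p.1 p.2 := by
    have := hb.continuous
    exact .add (by fun_prop) ((hσ.continuous.comp continuous_fst).clm_apply continuous_snd)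
  have hPrcont (s : ℝ) : Continuous (Pr s) :=
    (lipschitzWith_one_of_forall_dist_le (hCconvex s) (hPr s)).continuous
  have hXb := measurable_coordMeasurableSpace_of_recursion
    (fun i => ((hPrcont _).comp hstep).measurable) hXb0 hXbrec
  have hindep : IndepFun (Xb (j - 1)) (Z (j - 1)) P :=
    indepFun_of_measurable_coordMeasurableSpace hZindep hZm (I := Set.Iio (j - 1)) (J := {j - 1})
      (Set.disjoint_singleton_right.mpr Set.self_notMem_Iio) (hXb _)
      (measurable_coordMeasurableSpace (Set.mem_singleton _))
  have hXbm : Measurable (Xb (j - 1)) := (hXb _).mono (coordMeasurableSpace_le hZm) le_rfl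
  obtain ⟨y, hy⟩ := Measure.nonempty_support
    ((Measure.map_ne_zero_iff hXbm.aemeasurable).mpr (IsProbabilityMeasure.ne_zero P))
  have hZpos : (P.map (Z (j - 1))).IsOpenPosMeasure :=
    isOpenPosMeasure_map_of_iIndepFun (hZm _) (hZindep.precomp (Prod.mk_right_injective _))
      fun k => by rw [hZlaw]; exact (gaussianReal_absolutelyContinuous' 0 hΔ).isOpenPosMeasure
  refine hindep.measure_preimage_pos hXbm (hZm _) hstep.measurable hstep.continuousAt hy
    (z := (σ y).symm (x - y - (T / n) • b y)) (by rw [Measure.support_eq_univ]; trivial) ?_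
    (measurableSet_closedBall.inter isOpen_interior.measurableSet)
  simpa only [ContinuousLinearEquiv.apply_symm_apply, sub_sub, add_sub_cancel] using
    inter_mem (closedBall_mem_nhds x hε) (isOpen_interior.mem_nhds hx)

/-- Reflected Euler scheme in `ℝ^m`:
`X̄_{j+1} = Π_{C(t_{j+1})}(X̄_j + b(X̄_j)Δ_n + σ(X̄_j)(W_{t_{j+1}} − W_{t_j}))`, `X̄_0 = x₀ ∈ C(0)`,
with `b : ℝ^m → ℝ^m` and `σ : ℝ^m → GL_m(ℝ)` Lipschitz, `W` an `m`-dimensional Brownian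
motion (the increments `Z_j = W_{t_{j+1}} − W_{t_j}` have independent `N(0,T/n)` coordinates,
independent across steps), and `C(t)` convex bodies with `C(t) ⊆ C(s)` for `t ≥ s`.
With `H_j = X̄_{j−1} + b(X̄_{j−1})Δ_n + σ(X̄_{j−1})Z_{j-1}`, for every `j ∈ {1,…,n}`,
`x ∈ int(C(t_j))` and `ε > 0`, one has `P(H_j ∈ B̄(x,ε) ∩ int(C(t_j))) > 0`. -/
theorem stmt14 {Ω : Type*} [MeasurableSpace Ω] (P : Measure Ω) [IsProbabilityMeasure P]
    (m : ℕ) (T : ℝ) (hT : 0 < T) (n : ℕ) (hn : 0 < n)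
    (t : ℕ → ℝ) (ht : ∀ j, t j = j * (T / n))
    (C : ℝ → Set (EuclideanSpace ℝ (Fin m)))
    (hCcompact : ∀ s, IsCompact (C s)) (hCconvex : ∀ s, Convex ℝ (C s))
    (hCint : ∀ s, (interior (C s)).Nonempty)
    (hCdecr : ∀ s t', s ≤ t' → C t' ⊆ C s)
    (b : EuclideanSpace ℝ (Fin m) → EuclideanSpace ℝ (Fin m))
    (σ : EuclideanSpace ℝ (Fin m) →
      (EuclideanSpace ℝ (Fin m) ≃L[ℝ] EuclideanSpace ℝ (Fin m)))
    (Kb Kσ : NNReal) (hb : LipschitzWith Kb b)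
    (hσ : LipschitzWith Kσ fun v =>
      (σ v : EuclideanSpace ℝ (Fin m) →L[ℝ] EuclideanSpace ℝ (Fin m)))
    -- `Pr s` is the metric projection onto the convex body `C s`
    (Pr : ℝ → EuclideanSpace ℝ (Fin m) → EuclideanSpace ℝ (Fin m))
    (hPr : ∀ s x, Pr s x ∈ C s ∧ ∀ y ∈ C s, dist x (Pr s x) ≤ dist x y)
    (x₀ : EuclideanSpace ℝ (Fin m)) (hx₀ : x₀ ∈ C 0)
    -- the Brownian increments `Z_j = W_{t_{j+1}} − W_{t_j}`
    (Z : ℕ → Ω → EuclideanSpace ℝ (Fin m)) (hZm : ∀ j, Measurable (Z j))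
    (hZindep : iIndepFun
      (fun (p : ℕ × Fin m) ω => Z p.1 ω p.2) P)
    (hZlaw : ∀ j k, P.map (fun ω => Z j ω k) = gaussianReal 0 (T / n).toNNReal)
    -- the reflected Euler scheme
    (Xb : ℕ → Ω → EuclideanSpace ℝ (Fin m)) (hXb0 : ∀ ω, Xb 0 ω = x₀)
    (hXbrec : ∀ j ω, Xb (j + 1) ω =
      Pr (t (j + 1)) (Xb j ω + (T / n) • b (Xb j ω) + σ (Xb j ω) (Z j ω))) :
    ∀ j, 1 ≤ j → j ≤ n →
      ∀ x ∈ interior (C (t j)), ∀ ε > (0:ℝ),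
        0 < P {ω | Xb (j - 1) ω + (T / n) • b (Xb (j - 1) ω) + σ (Xb (j - 1) ω) (Z (j - 1) ω)
          ∈ closedBall x ε ∩ interior (C (t j))} :=
  stmt14_general P m T hT n hn t C hCconvex b σ Kb Kσ hb hσ Pr hPr x₀ Z hZm hZindep hZlaw Xb hXb0
    hXbrec
end

section
/- Let S ∈ ℝ, let X be a random variable with values in (−∞, S] whose CDF F satisfies F(y) ≤ φ(y) for y in a left neighborhood of S, where φ is C¹ near S with φ(S) ∈ (0,1). Let X_1,…,X_N be i.i.d. copies of X and Ŝ_N = max{X_1,…,X_N}. Then for every x < 0, P(N(Ŝ_N − S) ≤ x) → 0 as N → ∞; equivalently, the CDF of N(Ŝ_N − S) converges pointwise to 1_{[0,∞)} and N(S − Ŝ_N) → 0 in probability. -/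
open MeasureTheory ProbabilityTheory Filter

/-!
The event `N (Ŝ_N − S) ≤ x` is the event `Ŝ_N ≤ S + x / N`, whose probability is
`F(S + x / N) ^ N` by independence. As `S + x / N` increases to `S`, eventually
`F(S + x / N) ≤ φ(S + x / N) ≤ c` for a fixed `c ∈ (φ(S), 1)` by continuity of `φ`,
so the probability is at most `c ^ N → 0`.
-/

open Topology Set

lemma ProbabilityTheory.iIndepFun.measure_finset_sup'_le_eq_pow {Ω ι β : Type*} [MeasurableSpace Ω]
    {P : Measure Ω} [LinearOrder β] [TopologicalSpace β] [OrderClosedTopology β]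
    [MeasurableSpace β] [OpensMeasurableSpace β] {X : ι → Ω → β} {X₀ : Ω → β}
    (hindep : iIndepFun X P) (hident : ∀ i, IdentDistrib (X i) X₀ P P)
    (s : Finset ι) (hs : s.Nonempty) (t : β) :
    P {ω | s.sup' hs (fun i => X i ω) ≤ t} = P {ω | X₀ ω ≤ t} ^ s.card := by
  have hinter : {ω | s.sup' hs (fun i => X i ω) ≤ t} = ⋂ i ∈ s, X i ⁻¹' Iic t := by
    ext ω
    simp [Finset.sup'_le_iff]
  rw [hinter, hindep.measure_inter_preimage_eq_mul s fun _ _ => measurableSet_Iic]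
  rw [Finset.prod_congr rfl fun i _ => (hident i).measure_mem_eq measurableSet_Iic,
    Finset.prod_const]
  rfl

lemma ENNReal.tendsto_pow_succ_of_eventually_le {p : ℕ → ENNReal} {c : ENNReal} (hc : c < 1)
    (hp : ∀ᶠ n in atTop, p n ≤ c) : Tendsto (fun n => p n ^ (n + 1)) atTop (𝓝 0) :=
  tendsto_of_tendsto_of_tendsto_of_le_of_le' tendsto_const_nhds
    ((ENNReal.tendsto_pow_atTop_nhds_zero_of_lt_one hc).comp (tendsto_add_atTop_nat 1))
    (Eventually.of_forall fun _ => zero_le) (hp.mono fun _ h => pow_le_pow_left' h _)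

lemma exists_lt_one_eventually_le_of_le_continuousWithinAt {F φ : ℝ → ℝ} {S : ℝ}
    (hφ : ContinuousWithinAt φ (Iio S) S) (hφS : φ S < 1) (hFφ : ∀ᶠ y in 𝓝[<] S, F y ≤ φ y) :
    ∃ c < 1, ∀ᶠ y in 𝓝[<] S, F y ≤ c := by
  obtain ⟨c, hφc, hc⟩ := exists_between hφS
  refine ⟨c, hc, ?_⟩
  filter_upwards [hFφ, hφ.eventually (eventually_lt_nhds hφc)] with y hF hφy
  exact hF.trans hφy.le

lemma tendsto_add_div_natCast_succ_nhdsLT {S x : ℝ} (hx : x < 0) :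
    Tendsto (fun N : ℕ => S + x / ((N : ℝ) + 1)) atTop (𝓝[<] S) := by
  have hdiv : Tendsto (fun N : ℕ => x / ((N : ℝ) + 1)) atTop (𝓝 0) :=
    tendsto_const_nhds.div_atTop (tendsto_natCast_atTop_atTop.atTop_add tendsto_const_nhds)
  refine tendsto_nhdsWithin_iff.2 ⟨by simpa using hdiv.const_add S, Eventually.of_forall ?_⟩
  intro N
  have : x / ((N : ℝ) + 1) < 0 := div_neg_of_neg_of_pos hx (by positivity)
  simp only [mem_Iio]
  linarith

lemma mul_sub_le_iff_le_add_div {a M S x : ℝ} (ha : 0 < a) : a * (M - S) ≤ x ↔ M ≤ S + x / a := by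
  rw [mul_comm, ← le_div_iff₀ ha]
  constructor <;> intro h <;> linarith

theorem stmt17_general {Ω : Type*} [MeasurableSpace Ω] (P : Measure Ω) [IsProbabilityMeasure P]
    (S : ℝ) (X₀ : Ω → ℝ)
    (F : ℝ → ℝ) (hF : ∀ x, F x = (P {ω | X₀ ω ≤ x}).toReal)
    (φ : ℝ → ℝ) (hφC1 : ∃ δ > (0:ℝ), ContDiffOn ℝ 1 φ (Set.Icc (S - δ) S))
    (hφS : φ S ∈ Set.Ioo (0:ℝ) 1)
    (hFφ : ∃ δ > (0:ℝ), ∀ y ∈ Set.Ico (S - δ) S, F y ≤ φ y)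
    (X : ℕ → Ω → ℝ)
    (hindep : iIndepFun X P)
    (hident : ∀ k, IdentDistrib (X k) X₀ P P) :
    (∀ x < (0:ℝ),
      Tendsto
        (fun N : ℕ =>
          P {ω | ((N:ℝ) + 1) *
            ((Finset.range (N + 1)).sup' Finset.nonempty_range_add_one (fun k => X k ω) - S)
            ≤ x})
        atTop (nhds 0)) ∧
    (∀ ε > (0:ℝ),
      Tendsto
        (fun N : ℕ =>
          P {ω | ε < ((N:ℝ) + 1) *
            (S - (Finset.range (N + 1)).sup' Finset.nonempty_range_add_one (fun k => X k ω))})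
        atTop (nhds 0)) := by
  obtain ⟨δ₁, hδ₁, hC1⟩ := hφC1
  obtain ⟨δ₂, hδ₂, hle⟩ := hFφ
  have hφcont : ContinuousWithinAt φ (Iio S) S :=
    (hC1.continuousOn.continuousWithinAt ⟨by linarith, le_rfl⟩).mono_of_mem_nhdsWithin
      (Icc_mem_nhdsLT (by linarith))
  have hFφ' : ∀ᶠ y in 𝓝[<] S, F y ≤ φ y :=
    eventually_of_mem (Ico_mem_nhdsLT (by linarith)) hle
  obtain ⟨c, hc, hFc⟩ := exists_lt_one_eventually_le_of_le_continuousWithinAt hφcont hφS.2 hFφ'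
  have hcdf : ∀ t, P {ω | X₀ ω ≤ t} = ENNReal.ofReal (F t) := fun t => by
    rw [hF t, ENNReal.ofReal_toReal (measure_ne_top P _)]
  have lower_tail : ∀ x < (0:ℝ), Tendsto (fun N : ℕ => P {ω | ((N:ℝ) + 1) *
      ((Finset.range (N + 1)).sup' Finset.nonempty_range_add_one (fun k => X k ω) - S) ≤ x})
      atTop (𝓝 0) := by
    intro x hx
    simp only [mul_sub_le_iff_le_add_div (Nat.cast_add_one_pos _),
      hindep.measure_finset_sup'_le_eq_pow hident, Finset.card_range, hcdf]
    refine ENNReal.tendsto_pow_succ_of_eventually_le (c := ENNReal.ofReal c) ?_ ?_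
    · exact ENNReal.ofReal_lt_one.2 hc
    · exact ((tendsto_add_div_natCast_succ_nhdsLT hx).eventually hFc).mono
        fun _ h => ENNReal.ofReal_le_ofReal h
  refine ⟨lower_tail, fun ε hε => ?_⟩
  refine tendsto_of_tendsto_of_tendsto_of_le_of_le' tendsto_const_nhds
    (lower_tail (-ε) (by linarith)) (Eventually.of_forall fun _ => zero_le)
    (Eventually.of_forall fun _ => measure_mono fun ω (h : ε < _) => ?_)
  change _ ≤ -ε
  linarith

/-- Let `X₀` be a random variable with values in `(−∞,S]` whose CDF `F` satisfies
`F(y) ≤ φ(y)` for `y` in a left neighborhood of `S`, where `φ` is `C¹` near `S` with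
`φ(S) ∈ (0,1)`. Let `X_1, X_2, …` be i.i.d. copies of `X₀` and `Ŝ_N = max{X_1,…,X_N}`.
Then for every `x < 0`, `P(N(Ŝ_N − S) ≤ x) → 0` as `N → ∞`; equivalently the CDF of
`N(Ŝ_N − S)` converges pointwise to `1_{[0,∞)}` and `N(S − Ŝ_N) → 0` in probability. -/
theorem stmt17 {Ω : Type*} [MeasurableSpace Ω] (P : Measure Ω) [IsProbabilityMeasure P]
    (S : ℝ) (X₀ : Ω → ℝ) (hX₀m : Measurable X₀) (hval : ∀ ω, X₀ ω ≤ S)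
    (F : ℝ → ℝ) (hF : ∀ x, F x = (P {ω | X₀ ω ≤ x}).toReal)
    (φ : ℝ → ℝ) (hφC1 : ∃ δ > (0:ℝ), ContDiffOn ℝ 1 φ (Set.Icc (S - δ) S))
    (hφS : φ S ∈ Set.Ioo (0:ℝ) 1)
    (hFφ : ∃ δ > (0:ℝ), ∀ y ∈ Set.Ico (S - δ) S, F y ≤ φ y)
    (X : ℕ → Ω → ℝ) (hXm : ∀ k, Measurable (X k))
    (hindep : iIndepFun X P)
    (hident : ∀ k, IdentDistrib (X k) X₀ P P) :
    (∀ x < (0:ℝ),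
      Tendsto
        (fun N : ℕ =>
          P {ω | ((N:ℝ) + 1) *
            ((Finset.range (N + 1)).sup' Finset.nonempty_range_add_one (fun k => X k ω) - S)
            ≤ x})
        atTop (nhds 0)) ∧
    (∀ ε > (0:ℝ),
      Tendsto
        (fun N : ℕ =>
          P {ω | ε < ((N:ℝ) + 1) *
            (S - (Finset.range (N + 1)).sup' Finset.nonempty_range_add_one (fun k => X k ω))})
        atTop (nhds 0)) :=
  stmt17_general P S X₀ F hF φ hφC1 hφS hFφ X hindep hident
end
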